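/- arXiv:1706.07937 — 2 statements merged into one kernel-verified Lean document; each statement's English description precedes it below -/
import Mathlib

section
/- If p(z) = 1 + c₁z + c₂z² + ... is in the Carathéodory class, then there exists x ∈ ℂ with |x| ≤ 1 such that 2c₂ = c₁² + x(4 − c₁²). -/
/-!
The map `ω = (p - 1) / (p + 1)` sends the disc into itself and fixes `0`, so by the Schwarz lemma
`ψ z = ω z / z` sends the disc into the closed disc. Expanding, `ψ 0 = c₁ / 2` and
`ψ' 0 = (2 c₂ - c₁²) / 4`, and the Schwarz–Pick inequality `|ψ' 0| ≤ 1 - |ψ 0|²` becomes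
`|2 c₂ - c₁²| ≤ 4 - |c₁|² ≤ |4 - c₁²|`; take `x = (2 c₂ - c₁²) / (4 - c₁²)`, or `x = 0` if
`c₁² = 4`.
-/

open Metric Complex Filter Set FormalMultilinearSeries
open scoped Topology NNReal ComplexConjugate

theorem hasFPowerSeriesOnBall_ofScalars_of_hasSum {𝕜 : Type*} [RCLike 𝕜] {f : 𝕜 → 𝕜}
    {c : ℕ → 𝕜} {r : ℝ≥0} (hr : 0 < r)
    (hf : ∀ z ∈ ball (0 : 𝕜) r, HasSum (fun n ↦ c n * z ^ n) (f z)) :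
    HasFPowerSeriesOnBall f (ofScalars 𝕜 c) 0 r where
  r_le := by
    refine ENNReal.le_of_forall_pos_nnreal_lt fun s _ hs ↦ le_radius_of_summable _ ?_
    have hs : ((s : ℝ) : 𝕜) ∈ ball (0 : 𝕜) r := by
      simpa [RCLike.norm_ofReal] using ENNReal.coe_lt_coe.mp hs
    simpa [norm_mul, RCLike.norm_ofReal] using (hf _ hs).summable.norm
  r_pos := by simpa using hr
  hasSum {y} hy := by
    rw [Metric.eball_coe, mem_ball_zero_iff, ← dist_zero_right] at hy
    simpa [ofScalars_apply_eq, mul_comm] using hf y hy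

theorem norm_sub_one_lt_norm_add_one {w : ℂ} (hw : 0 < w.re) : ‖w - 1‖ < ‖w + 1‖ := by
  rw [← sq_lt_sq₀ (norm_nonneg _) (norm_nonneg _), Complex.sq_norm, Complex.sq_norm, normSq_apply,
    normSq_apply]
  simp only [sub_re, sub_im, add_re, add_im, one_re, one_im]
  nlinarith

theorem norm_sub_lt_norm_one_sub_conj_mul {a w : ℂ} (ha : ‖a‖ < 1) (hw : ‖w‖ < 1) :
    ‖w - a‖ < ‖1 - conj a * w‖ := by
  have key : ‖1 - conj a * w‖ ^ 2 - ‖w - a‖ ^ 2 = (1 - ‖a‖ ^ 2) * (1 - ‖w‖ ^ 2) := by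
    simp only [Complex.sq_norm, normSq_apply, sub_re, sub_im, mul_re, mul_im, one_re, one_im,
      conj_re, conj_im]
    ring
  have : 0 < (1 - ‖a‖ ^ 2) * (1 - ‖w‖ ^ 2) := by
    apply mul_pos <;> nlinarith [norm_nonneg a, norm_nonneg w]
  exact (sq_lt_sq₀ (norm_nonneg _) (norm_nonneg _)).mp (by linarith)

theorem exists_norm_le_one_eq_mul {u v : ℂ} (h : ‖u‖ ≤ ‖v‖) :
    ∃ x : ℂ, ‖x‖ ≤ 1 ∧ u = x * v := by
  rcases eq_or_ne v 0 with rfl | hv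
  · exact ⟨0, by simp, by simpa using h⟩
  · refine ⟨u / v, ?_, (div_mul_cancel₀ u hv).symm⟩
    rw [norm_div]
    exact div_le_one_of_le₀ h (norm_nonneg v)

theorem norm_deriv_le_one_sub_sq_of_mapsTo_ball {f : ℂ → ℂ}
    (hf : DifferentiableOn ℂ f (ball 0 1)) (hmaps : MapsTo f (ball 0 1) (ball 0 1)) :
    ‖deriv f 0‖ ≤ 1 - ‖f 0‖ ^ 2 := by
  -- Compose with the disc automorphism `w ↦ (w - a) / (1 - conj a * w)`, which sends `a = f 0`
  -- to `0`, and apply the Schwarz lemma.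
  set a := f 0
  have h0 : (0 : ℂ) ∈ ball 0 1 := mem_ball_self one_pos
  have hfz : ∀ z ∈ ball (0 : ℂ) 1, ‖f z‖ < 1 := fun z hz ↦ mem_ball_zero_iff.mp (hmaps hz)
  have hden : ∀ z ∈ ball (0 : ℂ) 1, 1 - conj a * f z ≠ 0 := fun z hz ↦ norm_pos_iff.mp <|
    (norm_nonneg _).trans_lt (norm_sub_lt_norm_one_sub_conj_mul (hfz 0 h0) (hfz z hz))
  set g : ℂ → ℂ := fun z ↦ (f z - a) / (1 - conj a * f z)
  have hg : DifferentiableOn ℂ g (ball 0 1) :=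
    (hf.sub_const a).div ((hf.const_mul _).const_sub 1) hden
  have hgmaps : MapsTo g (ball 0 1) (closedBall (g 0) 1) := fun z hz ↦ by
    rw [mem_closedBall, show g 0 = 0 by simp [g, a], dist_zero_right, norm_div]
    exact div_le_one_of_le₀ (norm_sub_lt_norm_one_sub_conj_mul (hfz 0 h0) (hfz z hz)).le
      (norm_nonneg _)
  have hD0 : 1 - conj a * a = ((1 - ‖a‖ ^ 2 : ℝ) : ℂ) := by
    rw [mul_comm, mul_conj, normSq_eq_norm_sq]; push_cast; ring
  have hD0_pos : 0 < 1 - ‖a‖ ^ 2 := by nlinarith [hfz 0 h0, norm_nonneg a]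
  have hderiv : HasDerivAt g (deriv f 0 / (1 - conj a * a)) 0 := by
    have hf0 := (hf.differentiableAt (ball_mem_nhds _ one_pos)).hasDerivAt
    refine ((hf0.sub_const a).fun_div ((hf0.const_mul (conj a)).const_sub 1)
      (hden 0 h0)).congr_deriv ?_
    rw [sub_self, zero_mul, sub_zero, pow_two, mul_div_mul_right _ _ (hden 0 h0)]
  have := norm_deriv_le_one_of_mapsTo_ball hg hgmaps one_pos
  rwa [hderiv.deriv, norm_div, hD0, norm_real, Real.norm_of_nonneg hD0_pos.le,
    div_le_one hD0_pos] at this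

theorem norm_deriv_le_one_sub_sq_of_mapsTo_closedBall {f : ℂ → ℂ}
    (hf : DifferentiableOn ℂ f (ball 0 1)) (hmaps : MapsTo f (ball 0 1) (closedBall 0 1)) :
    ‖deriv f 0‖ ≤ 1 - ‖f 0‖ ^ 2 := by
  have hf0 : DifferentiableAt ℂ f 0 := hf.differentiableAt (ball_mem_nhds _ one_pos)
  -- Apply the open-ball version to `s * f` for `0 < s < 1` and let `s → 1`.
  have hscaled : ∀ s ∈ Ioo (0 : ℝ) 1, s * ‖deriv f 0‖ + s ^ 2 * ‖f 0‖ ^ 2 ≤ 1 := by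
    rintro s ⟨hs0, hs1⟩
    have hnorm : ∀ w : ℂ, ‖(s : ℂ) * w‖ = s * ‖w‖ := fun w ↦ by
      rw [norm_mul, norm_real, Real.norm_of_nonneg hs0.le]
    have hmaps_s : MapsTo (fun z ↦ (s : ℂ) * f z) (ball 0 1) (ball 0 1) := fun z hz ↦ by
      have := mem_closedBall_zero_iff.mp (hmaps hz)
      rw [mem_ball_zero_iff, hnorm]
      nlinarith [norm_nonneg (f z)]
    have := norm_deriv_le_one_sub_sq_of_mapsTo_ball (hf.const_mul _) hmaps_s
    rw [deriv_const_mul _ hf0, hnorm, hnorm, mul_pow] at this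
    linarith
  have hlim : Tendsto (fun s : ℝ ↦ s * ‖deriv f 0‖ + s ^ 2 * ‖f 0‖ ^ 2) (𝓝[<] 1)
      (𝓝 (1 * ‖deriv f 0‖ + 1 ^ 2 * ‖f 0‖ ^ 2)) :=
    ((Continuous.tendsto (by fun_prop) 1)).mono_left nhdsWithin_le_nhds
  have := le_of_tendsto hlim (eventually_of_mem (Ioo_mem_nhdsLT one_pos) hscaled)
  linarith

theorem norm_le_one_of_forall_norm_mul_lt_one {g : ℂ → ℂ}
    (hg : DifferentiableOn ℂ g (ball 0 1))
    (h : ∀ z ∈ ball (0 : ℂ) 1, ‖z * g z‖ < 1) {z : ℂ} (hz : z ∈ ball (0 : ℂ) 1) :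
    ‖g z‖ ≤ 1 := by
  set F : ℂ → ℂ := fun w ↦ w * g w
  have hF : DifferentiableOn ℂ F (ball 0 1) := differentiableOn_id.mul hg
  have hmaps : MapsTo F (ball 0 1) (closedBall (F 0) 1) := fun w hw ↦ by
    simpa [F] using (h w hw).le
  have hslope : dslope F 0 z = g z := by
    rcases eq_or_ne z 0 with rfl | hz0
    · have hg0 := (hg.differentiableAt (ball_mem_nhds _ one_pos)).hasDerivAt
      simpa [F] using ((hasDerivAt_id' 0).fun_mul hg0).deriv
    · simpa [F] using dslope_sub_smul_of_ne g hz0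
  simpa [hslope] using norm_dslope_le_div_of_mapsTo_ball hF hmaps hz

/-- `z ↦ ω z / z` for the Schwarz function `ω = (p - 1) / (p + 1)` of `p`, when `p 0 = 1`. -/
noncomputable def schwarzQuotient (p : ℂ → ℂ) (z : ℂ) : ℂ := dslope p 0 z / (p z + 1)

section Caratheodory

variable {p : ℂ → ℂ}

theorem differentiableOn_schwarzQuotient (hp : DifferentiableOn ℂ p (ball 0 1))
    (hre : ∀ z ∈ ball (0 : ℂ) 1, 0 < (p z).re) :
    DifferentiableOn ℂ (schwarzQuotient p) (ball 0 1) :=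
  ((differentiableOn_dslope (ball_mem_nhds _ one_pos)).mpr hp).div (hp.add_const 1)
    fun z hz ↦ ne_zero_of_re_pos (by simpa using (hre z hz).trans (lt_add_one _))

theorem norm_schwarzQuotient_le_one (hp : DifferentiableOn ℂ p (ball 0 1)) (hp0 : p 0 = 1)
    (hre : ∀ z ∈ ball (0 : ℂ) 1, 0 < (p z).re) {z : ℂ} (hz : z ∈ ball (0 : ℂ) 1) :
    ‖schwarzQuotient p z‖ ≤ 1 := by
  refine norm_le_one_of_forall_norm_mul_lt_one (differentiableOn_schwarzQuotient hp hre)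
    (fun w hw ↦ ?_) hz
  have hslope : w * dslope p 0 w = p w - 1 := by simpa [hp0] using sub_smul_dslope p 0 w
  have hden : p w + 1 ≠ 0 := ne_zero_of_re_pos (by simpa using (hre w hw).trans (lt_add_one _))
  rw [schwarzQuotient, ← mul_div_assoc, hslope, norm_div, div_lt_one (norm_pos_iff.mpr hden)]
  exact norm_sub_one_lt_norm_add_one (hre w hw)

theorem hasDerivAt_schwarzQuotient (hp : DifferentiableAt ℂ (dslope p 0) 0) (hp0 : p 0 = 1) :
    HasDerivAt (schwarzQuotient p) ((2 * deriv (dslope p 0) 0 - deriv p 0 ^ 2) / 4) 0 := by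
  have hden : p 0 + 1 ≠ 0 := by norm_num [hp0]
  refine (hp.hasDerivAt.fun_div (hp.of_dslope.hasDerivAt.add_const 1) hden).congr_deriv ?_
  rw [dslope_same, hp0]
  ring

theorem norm_two_mul_coeff_two_sub_sq_le {c : ℕ → ℂ}
    (hP : HasFPowerSeriesOnBall p (ofScalars ℂ c) 0 1) (hp0 : p 0 = 1)
    (hre : ∀ z ∈ ball (0 : ℂ) 1, 0 < (p z).re) : ‖2 * c 2 - c 1 ^ 2‖ ≤ 4 - ‖c 1‖ ^ 2 := by
  have hp : DifferentiableOn ℂ p (ball 0 1) := by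
    simpa [← ENNReal.coe_one, Metric.eball_coe] using hP.differentiableOn
  have hslope := hP.hasFPowerSeriesAt.has_fpower_series_dslope_fslope
  have hc1 : deriv p 0 = c 1 := by simp [hP.hasFPowerSeriesAt.deriv]
  have hc2 : deriv (dslope p 0) 0 = c 2 := by simp [hslope.deriv, coeff_fslope]
  have hpick := norm_deriv_le_one_sub_sq_of_mapsTo_closedBall
    (differentiableOn_schwarzQuotient hp hre)
    fun z hz ↦ mem_closedBall_zero_iff.mpr (norm_schwarzQuotient_le_one hp hp0 hre hz)
  rw [(hasDerivAt_schwarzQuotient hslope.differentiableAt hp0).deriv, schwarzQuotient,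
    dslope_same, hp0, hc1, hc2, norm_div, norm_div] at hpick
  norm_num at hpick
  linarith

end Caratheodory

theorem caratheodory_c2_general (p : ℂ → ℂ) (c : ℕ → ℂ)
    (hp0 : p 0 = 1)
    (hre : ∀ z ∈ ball (0 : ℂ) 1, 0 < (p z).re)
    (hsum : ∀ z ∈ ball (0 : ℂ) 1, HasSum (fun n : ℕ => c n * z ^ n) (p z)) :
    ∃ x : ℂ, ‖x‖ ≤ 1 ∧ 2 * c 2 = (c 1) ^ 2 + x * (4 - (c 1) ^ 2) := by
  have hP : HasFPowerSeriesOnBall p (ofScalars ℂ c) 0 1 :=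
    hasFPowerSeriesOnBall_ofScalars_of_hasSum one_pos (by simpa using hsum)
  have hbound : ‖2 * c 2 - c 1 ^ 2‖ ≤ ‖4 - c 1 ^ 2‖ := by
    calc ‖2 * c 2 - c 1 ^ 2‖ ≤ 4 - ‖c 1‖ ^ 2 := norm_two_mul_coeff_two_sub_sq_le hP hp0 hre
      _ = ‖(4 : ℂ)‖ - ‖c 1 ^ 2‖ := by norm_num
      _ ≤ ‖4 - c 1 ^ 2‖ := norm_sub_norm_le _ _
  obtain ⟨x, hx, hmul⟩ := exists_norm_le_one_eq_mul hbound
  exact ⟨x, hx, by linear_combination hmul⟩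

/-- If `p(z) = 1 + c₁z + c₂z² + ⋯` is in the Carathéodory class, then there exists `x ∈ ℂ`
with `|x| ≤ 1` such that `2c₂ = c₁² + x(4 − c₁²)`. -/
theorem caratheodory_c2 (p : ℂ → ℂ) (c : ℕ → ℂ)
    (hp : DifferentiableOn ℂ p (ball (0 : ℂ) 1))
    (hp0 : p 0 = 1)
    (hre : ∀ z ∈ ball (0 : ℂ) 1, 0 < (p z).re)
    (hsum : ∀ z ∈ ball (0 : ℂ) 1, HasSum (fun n : ℕ => c n * z ^ n) (p z)) :
    ∃ x : ℂ, ‖x‖ ≤ 1 ∧ 2 * c 2 = (c 1) ^ 2 + x * (4 - (c 1) ^ 2) :=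
  caratheodory_c2_general p c hp0 hre hsum
end

section
/- Let κ₁, κ₂, κ₄ ≥ 0 and κ₃ ≤ 0 be real numbers with κ₂ + 2(κ₃+κ₄) ≥ 0. Define ψ(γ₁,γ₂) = κ₁ + κ₂(γ₁+γ₂) + κ₃(γ₁²+γ₂²) + κ₄(γ₁+γ₂)² on the closed square [0,1]×[0,1]. Then the maximum of ψ on the square equals ψ(1,1) = κ₁ + 2κ₂ + 2κ₃ + 4κ₄. -/
/-- Let `κ₁, κ₂, κ₄ ≥ 0` and `κ₃ ≤ 0` with `κ₂ + 2(κ₃+κ₄) ≥ 0`. Then the maximum on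
`[0,1] × [0,1]` of `ψ(γ₁,γ₂) = κ₁ + κ₂(γ₁+γ₂) + κ₃(γ₁²+γ₂²) + κ₄(γ₁+γ₂)²` equals
`ψ(1,1) = κ₁ + 2κ₂ + 2κ₃ + 4κ₄`. -/
theorem psi_max (κ₁ κ₂ κ₃ κ₄ : ℝ)
    (h1 : 0 ≤ κ₁) (h2 : 0 ≤ κ₂) (h4 : 0 ≤ κ₄) (h3 : κ₃ ≤ 0)
    (h5 : 0 ≤ κ₂ + 2 * (κ₃ + κ₄)) :
    (∀ γ₁ ∈ Set.Icc (0:ℝ) 1, ∀ γ₂ ∈ Set.Icc (0:ℝ) 1,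
      κ₁ + κ₂ * (γ₁ + γ₂) + κ₃ * (γ₁^2 + γ₂^2) + κ₄ * (γ₁ + γ₂)^2
        ≤ κ₁ + 2*κ₂ + 2*κ₃ + 4*κ₄) ∧
    κ₁ + κ₂ * ((1:ℝ) + 1) + κ₃ * ((1:ℝ)^2 + 1^2) + κ₄ * ((1:ℝ) + 1)^2
      = κ₁ + 2*κ₂ + 2*κ₃ + 4*κ₄ := by
  refine ⟨fun γ₁ ⟨ha, hb⟩ γ₂ ⟨hc, hd⟩ => ?_, by ring⟩
  nlinarith [mul_nonneg (sub_nonneg.2 hb) (sub_nonneg.2 hd),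
    mul_nonneg ha hc, mul_nonneg (sub_nonneg.2 hb) ha,
    mul_nonneg (sub_nonneg.2 hd) hc,
    mul_nonneg (mul_nonneg (sub_nonneg.2 hb) (sub_nonneg.2 hd)) h4,
    mul_nonneg (sub_nonneg.2 hb) h2, mul_nonneg (sub_nonneg.2 hd) h2,
    mul_nonneg (mul_nonneg (sub_nonneg.2 hb) (sub_nonneg.2 hb)) h4,
    mul_nonneg (mul_nonneg (sub_nonneg.2 hd) (sub_nonneg.2 hd)) h4,
    mul_nonneg (mul_nonneg (sub_nonneg.2 hb) ha) (neg_nonneg.2 h3),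
    mul_nonneg (mul_nonneg (sub_nonneg.2 hd) hc) (neg_nonneg.2 h3),
    mul_nonneg (sub_nonneg.2 hb) h5, mul_nonneg (sub_nonneg.2 hd) h5]
end
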